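/- (Uniqueness of approximate derivatives.) Let D ⊆ ℝ^n be measurable, f : D → ℝ measurable, k a nonnegative integer, and x₀ ∈ D a point at which D has density one. Suppose p and q are both polynomial functions ℝ^n → ℝ of degree at most k such that f is approximately differentiable of order k at x₀ with polynomial p, and also with polynomial q. Then p = q. (This is part (2) of the paper's Proposition 3.3 specialized to the abelian Carnot group ℝ^n.) -/

import Mathlib

open MeasureTheory Metric Filter

noncomputable section

/-- `ℝ^n` with the Euclidean norm. -/
abbrev Euc (n : ℕ) := EuclideanSpace ℝ (Fin n)

/-- A set `S ⊆ ℝ^n` has density one at `x` if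
`vol(S ∩ B(x,r))/vol(B(x,r)) → 1` as `r → 0⁺`. -/
def DensityOneAt {n : ℕ} (S : Set (Euc n)) (x : Euc n) : Prop :=
  Tendsto (fun r : ℝ => volume (S ∩ ball x r) / volume (ball x r))
    (nhdsWithin 0 (Set.Ioi 0)) (nhds 1)

/-- A set has density zero at `x` if its complement has density one at `x`. -/
def DensityZeroAt {n : ℕ} (S : Set (Euc n)) (x : Euc n) : Prop :=
  DensityOneAt Sᶜ x

/-- Degree `|J|` of a multi-index. -/
def mdeg {n : ℕ} (J : Fin n → ℕ) : ℕ := ∑ i, J i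

/-- Monomial `x^J = x₁^{j₁} ⋯ xₙ^{jₙ}`. -/
def mpow {n : ℕ} (x : Euc n) (J : Fin n → ℕ) : ℝ := ∏ i, (x i) ^ (J i)

/-- `J! = j₁! ⋯ jₙ!`. -/
def Jfact {n : ℕ} (J : Fin n → ℕ) : ℕ := ∏ i, Nat.factorial (J i)

/-- `p : ℝ^n → ℝ` is a polynomial function of (total) degree at most `k`. -/
def IsPolyFun (n k : ℕ) (p : Euc n → ℝ) : Prop :=
  ∃ P : MvPolynomial (Fin n) ℝ, P.totalDegree ≤ k ∧
    ∀ x : Euc n, p x = MvPolynomial.eval (fun i => x i) P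

/-- `f : D → ℝ` is approximately differentiable of order `k` at `x₀` (a density point
of `D`) with polynomial `p`: `p` has degree at most `k` and for every `ε > 0` the set
`{x ∈ D : |f x − p x| > ε ‖x − x₀‖^k}` has density zero at `x₀`. -/
def ApproxDiffAt {n : ℕ} (k : ℕ) (D : Set (Euc n)) (f : Euc n → ℝ)
    (x₀ : Euc n) (p : Euc n → ℝ) : Prop :=
  DensityOneAt D x₀ ∧ IsPolyFun n k p ∧
    ∀ ε : ℝ, 0 < ε →
      DensityZeroAt {x | x ∈ D ∧ ε * ‖x - x₀‖ ^ k < |f x - p x|} x₀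

/-- `f : D → ℝ` has an approximate `(k−1)`-Taylor polynomial at `x₀` (a density point
of `D`) with polynomial `p`: `p` has degree at most `k−1` and there is `M > 0` such that
`{x ∈ D : |f x − p x| > M ‖x − x₀‖^k}` has density zero at `x₀`. -/
def HasApproxTaylorAt {n : ℕ} (k : ℕ) (D : Set (Euc n)) (f : Euc n → ℝ)
    (x₀ : Euc n) (p : Euc n → ℝ) : Prop :=
  DensityOneAt D x₀ ∧ IsPolyFun n (k - 1) p ∧
    ∃ M : ℝ, 0 < M ∧
      DensityZeroAt {x | x ∈ D ∧ M * ‖x - x₀‖ ^ k < |f x - p x|} x₀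

/-- The finset of multi-indices `J` with `|J| ≤ k`. -/
def multiIdxLe (n k : ℕ) : Finset (Fin n → ℕ) :=
  (Fintype.piFinset fun _ : Fin n => Finset.range (k+1)).filter fun J => mdeg J ≤ k

/-- The finset of multi-indices `J` with `|J| < k` (i.e. `|J| ≤ k−1`). -/
def multiIdxLt (n k : ℕ) : Finset (Fin n → ℕ) :=
  (Fintype.piFinset fun _ : Fin n => Finset.range (k+1)).filter fun J => mdeg J < k

/-- Partial derivative `∂g/∂xᵢ` (as a line derivative in the direction `eᵢ`). -/
def pd {n : ℕ} (i : Fin n) (g : Euc n → ℝ) : Euc n → ℝ :=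
  fun x => lineDeriv ℝ g x (EuclideanSpace.single i 1)

/-- The list of directions `(1,…,1,2,…,2,…)` (direction `i` repeated `J i` times)
encoding the iterated partial derivative `∂^{|J|}/∂x₁^{j₁}⋯∂xₙ^{jₙ}`. -/
def multiList (n : ℕ) (J : Fin n → ℕ) : List (Fin n) :=
  (List.finRange n).flatMap fun i => List.replicate (J i) i

/-- Iterated partial derivatives along a list of coordinate directions
(the head of the list is the outermost derivative). -/
def iterD {n : ℕ} : List (Fin n) → (Euc n → ℝ) → (Euc n → ℝ)
  | [], g => g
  | i :: L, g => pd i (iterD L g)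

/-- The iterated partial derivatives along the list `L` all exist at every point. -/
def iterDExists {n : ℕ} : List (Fin n) → (Euc n → ℝ) → Prop
  | [], _ => True
  | i :: L, g => iterDExists L g ∧
      ∀ x : Euc n, LineDifferentiableAt ℝ (iterD L g) x (EuclideanSpace.single i 1)

/-- `D^J u = ∂^{|J|}u/∂x₁^{j₁}⋯∂xₙ^{jₙ}`. -/
def DJ {n : ℕ} (J : Fin n → ℕ) (u : Euc n → ℝ) : Euc n → ℝ := iterD (multiList n J) u

/-- The Taylor polynomial of `u` of degree `k−1` centered at `x₀`:
`P_{x₀}(y) = Σ_{|I| ≤ k−1} D^I u(x₀) (y − x₀)^I / I!`. -/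
def TaylorPoly {n : ℕ} (k : ℕ) (u : Euc n → ℝ) (x₀ : Euc n) : Euc n → ℝ :=
  fun y => ∑ I ∈ multiIdxLt n k, DJ I u x₀ * mpow (y - x₀) I / (Jfact I : ℝ)

/-- `u` belongs to `Lip(k, ℝ^n)` with constant `M`: all partial derivatives `D^J u`
with `|J| ≤ k−1` exist at every point, and for all such `J` and all `x, x₀`,
`|D^J u(x₀)| ≤ M` and `|D^J u(x) − D^J P_{x₀}(x)| ≤ M ‖x − x₀‖^{k−|J|}`. -/
def MemLip (n k : ℕ) (M : ℝ) (u : Euc n → ℝ) : Prop :=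
  (∀ J : Fin n → ℕ, mdeg J < k → iterDExists (multiList n J) u) ∧
  ∀ J : Fin n → ℕ, mdeg J < k → ∀ x x₀ : Euc n,
    |DJ J u x₀| ≤ M ∧
    |DJ J u x - DJ J (TaylorPoly k u x₀) x| ≤ M * ‖x - x₀‖ ^ (k - mdeg J)

/-- Truncation of `f` at level `h`: equals `f` where `−h < f < h`, equals `h` where
`f ≥ h`, and equals `−h` where `f ≤ −h`. -/
def trunc {n : ℕ} (h : ℕ) (f : Euc n → ℝ) : Euc n → ℝ :=
  fun x => if (h : ℝ) ≤ f x then (h : ℝ) else if f x ≤ -(h : ℝ) then -(h : ℝ) else f x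

/-!
Both approximations give `|p - q| ≤ ε ‖x - x₀‖ ^ k` outside `Dᶜ` and two sets of density zero
at `x₀`, so it suffices to show that a polynomial `g` of degree `≤ k` for which
`{x | ε ‖x - x₀‖ ^ k < |g x|}` has density zero at `x₀` for every `ε > 0` vanishes.
If not, let `L` be the nonzero homogeneous component of lowest degree `m ≤ k` of `g (x₀ + ·)`.
For suitable `c > 0` the set `{y | c ‖y‖ ^ m < |L y|}` is a nonempty open cone, and close to its
vertex the higher components are dominated by `L`, so that `|g (x₀ + y)| > (c / 2) ‖y‖ ^ k` there.
A cone fills a fixed positive proportion of every ball centred at its vertex: a contradiction.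
-/

open scoped Pointwise

namespace MvPolynomial

variable {σ R : Type*} [CommSemiring R]

lemma totalDegree_aeval_le (P : MvPolynomial σ R) {g : σ → MvPolynomial σ R}
    (hg : ∀ i, (g i).totalDegree ≤ 1) : (aeval g P).totalDegree ≤ P.totalDegree := by
  conv_lhs => rw [← support_sum_monomial_coeff P]
  rw [map_sum]
  refine totalDegree_finsetSum_le fun d hd => ?_
  rw [aeval_monomial]
  calc (algebraMap R _ (coeff d P) * d.prod fun i k => g i ^ k).totalDegree
      ≤ ∑ i ∈ d.support, d i * (g i).totalDegree := by
        refine (totalDegree_mul _ _).trans ?_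
        rw [algebraMap_eq, totalDegree_C, zero_add]
        exact (totalDegree_finsetProd _ _).trans
          (Finset.sum_le_sum fun i _ => totalDegree_pow _ _)
    _ ≤ ∑ i ∈ d.support, d i := Finset.sum_le_sum fun i _ => by
        simpa using Nat.mul_le_mul_left (d i) (hg i)
    _ ≤ P.totalDegree := le_totalDegree hd

lemma eval_aeval_X_add_C (P : MvPolynomial σ R) (c y : σ → R) :
    eval y (aeval (fun i => X i + C (c i)) P) = eval (y + c) P := by
  induction P using MvPolynomial.induction_on with
  | C a => simp
  | add p q hp hq => simp only [map_add, hp, hq]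
  | mul_X p i hp => simp only [map_mul, aeval_X, eval_add, eval_X, eval_C, hp, Pi.add_apply]

lemma IsHomogeneous.eval_smul {φ : MvPolynomial σ R} {m : ℕ} (h : φ.IsHomogeneous m) (t : R)
    (x : σ → R) : eval (t • x) φ = t ^ m * eval x φ := by
  rw [eval_eq, eval_eq, Finset.mul_sum]
  refine Finset.sum_congr rfl fun d hd => ?_
  simp only [Pi.smul_apply, smul_eq_mul, mul_pow, Finset.prod_mul_distrib,
    Finset.prod_pow_eq_pow_sum, ← h.degree_eq_sum_deg_support hd]
  ring

lemma exists_homogeneousComponent_ne_zero_lt_degree {R : Type*} [CommRing R]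
    {P : MvPolynomial σ R} (hP : P ≠ 0) :
    ∃ m, homogeneousComponent m P ≠ 0 ∧
      ∀ d ∈ (P - homogeneousComponent m P).support, m < d.degree := by
  classical
  have hex : ∃ m, homogeneousComponent m P ≠ 0 := by
    by_contra! h
    exact hP (by rw [← sum_homogeneousComponent P]; exact Finset.sum_eq_zero fun m _ => h m)
  refine ⟨Nat.find hex, Nat.find_spec hex, fun d hd => ?_⟩
  rw [mem_support_iff, coeff_sub, coeff_homogeneousComponent] at hd
  by_contra! hle
  rcases hle.lt_or_eq with hlt | heq
  · have hzero := congrArg (coeff d) (not_not.1 (Nat.find_min hex hlt))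
    rw [coeff_homogeneousComponent, if_pos rfl, coeff_zero] at hzero
    simp [hzero, hlt.ne] at hd
  · simp [heq] at hd

end MvPolynomial

lemma smul_eq_self_of_smul_mem {E : Type*} [AddCommGroup E] [Module ℝ E] {W : Set E}
    (hW : ∀ t : ℝ, 0 < t → ∀ y ∈ W, t • y ∈ W) {t : ℝ} (ht : 0 < t) : t • W = W := by
  refine (Set.smul_set_subset_iff.2 (hW t ht)).antisymm fun y hy => ?_
  rw [Set.mem_smul_set_iff_inv_smul_mem₀ ht.ne']
  exact hW _ (inv_pos.2 ht) y hy

section Density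

variable {n : ℕ}

lemma densityOneAt_preimage_add_left_iff {S : Set (Euc n)} {x₀ : Euc n} :
    DensityOneAt ((x₀ + ·) ⁻¹' S) 0 ↔ DensityOneAt S x₀ := by
  have hball (r : ℝ) : ball 0 r = (x₀ + ·) ⁻¹' ball x₀ r := by rw [preimage_add_ball, sub_self]
  refine tendsto_congr fun r => ?_
  rw [hball, ← Set.preimage_inter, measure_preimage_add, measure_preimage_add]

lemma DensityZeroAt.preimage_add_left {S : Set (Euc n)} {x₀ : Euc n} (h : DensityZeroAt S x₀) :
    DensityZeroAt ((x₀ + ·) ⁻¹' S) 0 := by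
  rwa [DensityZeroAt, ← Set.preimage_compl, densityOneAt_preimage_add_left_iff]

lemma DensityOneAt.densityZeroAt_compl {S : Set (Euc n)} {x : Euc n} (h : DensityOneAt S x) :
    DensityZeroAt Sᶜ x := by
  rwa [DensityZeroAt, compl_compl]

lemma measure_inter_ball_div_le_one (S : Set (Euc n)) (x : Euc n) (r : ℝ) :
    volume (S ∩ ball x r) / volume (ball x r) ≤ 1 :=
  ENNReal.div_le_of_le_mul (by rw [one_mul]; exact measure_mono Set.inter_subset_right)

lemma DensityZeroAt.mono {S T : Set (Euc n)} {x : Euc n} (hST : S ⊆ T) (hT : DensityZeroAt T x) :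
    DensityZeroAt S x :=
  tendsto_of_tendsto_of_tendsto_of_le_of_le hT tendsto_const_nhds
    (fun _ => ENNReal.div_le_div_right (measure_mono <|
      Set.inter_subset_inter_left _ <| Set.compl_subset_compl.2 hST) _)
    (fun r => measure_inter_ball_div_le_one _ x r)

lemma measure_compl_inter_ball_div {S : Set (Euc n)} (hS : NullMeasurableSet S) (x : Euc n)
    {r : ℝ} (hr : 0 < r) :
    volume (Sᶜ ∩ ball x r) / volume (ball x r)
      = 1 - volume (S ∩ ball x r) / volume (ball x r) := by
  have h0 : volume (ball x r) ≠ 0 := (measure_ball_pos volume x hr).ne'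
  have htop : volume (ball x r) ≠ ⊤ := measure_ball_lt_top.ne
  have hsplit := measure_inter_add_sdiff₀ (ball x r) hS
  rw [← ENNReal.div_self h0 htop, ← ENNReal.sub_div fun _ _ => h0, Set.inter_comm S,
    ← hsplit, ENNReal.add_sub_cancel_left (measure_ne_top_of_subset Set.inter_subset_left htop),
    Set.inter_comm, Set.sdiff_eq]

lemma densityZeroAt_iff_tendsto {S : Set (Euc n)} (hS : NullMeasurableSet S) {x : Euc n} :
    DensityZeroAt S x ↔ Tendsto (fun r : ℝ => volume (S ∩ ball x r) / volume (ball x r))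
      (nhdsWithin 0 (Set.Ioi 0)) (nhds 0) := by
  have hcompl : DensityZeroAt S x ↔ Tendsto
      (fun r : ℝ => 1 - volume (S ∩ ball x r) / volume (ball x r))
      (nhdsWithin 0 (Set.Ioi 0)) (nhds 1) :=
    tendsto_congr' <| eventually_nhdsWithin_of_forall fun r hr =>
      measure_compl_inter_ball_div hS x hr
  rw [hcompl]
  constructor
  · intro h
    have := ENNReal.Tendsto.sub tendsto_const_nhds h (Or.inl ENNReal.one_ne_top)
    simpa [ENNReal.sub_sub_cancel ENNReal.one_ne_top (measure_inter_ball_div_le_one S x _)]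
      using this
  · intro h
    simpa using ENNReal.Tendsto.sub tendsto_const_nhds h (Or.inl ENNReal.one_ne_top)

lemma DensityZeroAt.union {S T : Set (Euc n)} {x : Euc n} (hS : MeasurableSet S)
    (hT : MeasurableSet T) (hSx : DensityZeroAt S x) (hTx : DensityZeroAt T x) :
    DensityZeroAt (S ∪ T) x := by
  rw [densityZeroAt_iff_tendsto (hS.union hT).nullMeasurableSet]
  rw [densityZeroAt_iff_tendsto hS.nullMeasurableSet] at hSx
  rw [densityZeroAt_iff_tendsto hT.nullMeasurableSet] at hTx
  refine tendsto_of_tendsto_of_tendsto_of_le_of_le tendsto_const_nhds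
    (by simpa using hSx.add hTx) (fun _ => zero_le) fun r => ?_
  rw [← ENNReal.add_div, Set.union_inter_distrib_right]
  exact ENNReal.div_le_div_right (measure_union_le _ _) _

lemma measure_inter_ball_zero_of_smul_mem {W : Set (Euc n)}
    (hW : ∀ t : ℝ, 0 < t → ∀ y ∈ W, t • y ∈ W) {r : ℝ} (hr : 0 < r) :
    volume (W ∩ ball 0 r) = ENNReal.ofReal (r ^ n) * volume (W ∩ ball 0 1) := by
  have hball : ball (0 : Euc n) r = r • ball 0 1 := by
    rw [_root_.smul_ball hr.ne', smul_zero, Real.norm_eq_abs, abs_of_pos hr, mul_one]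
  rw [hball, ← smul_eq_self_of_smul_mem hW hr, ← Set.smul_set_inter₀ hr.ne',
    smul_eq_self_of_smul_mem hW hr, Measure.addHaar_smul_of_nonneg volume hr.le,
    finrank_euclideanSpace_fin]

lemma not_densityZeroAt_inter_ball_of_smul_mem {W : Set (Euc n)} (hWm : MeasurableSet W)
    (hW : ∀ t : ℝ, 0 < t → ∀ y ∈ W, t • y ∈ W) (hW₁ : volume (W ∩ ball 0 1) ≠ 0)
    {r₀ : ℝ} (hr₀ : 0 < r₀) : ¬ DensityZeroAt (W ∩ ball 0 r₀) 0 := by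
  rw [densityZeroAt_iff_tendsto (hWm.inter measurableSet_ball).nullMeasurableSet]
  intro h
  have hconst : ∀ᶠ r in nhdsWithin (0 : ℝ) (Set.Ioi 0),
      volume (W ∩ ball 0 r₀ ∩ ball 0 r) / volume (ball (0 : Euc n) r)
        = volume (W ∩ ball 0 1) / volume (ball (0 : Euc n) 1) := by
    filter_upwards [Ioc_mem_nhdsGT hr₀] with r ⟨hr, hrr₀⟩
    have hrn : ENNReal.ofReal (r ^ n) ≠ 0 := by positivity
    rw [Set.inter_assoc, Set.inter_eq_right.2 (ball_subset_ball hrr₀),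
      measure_inter_ball_zero_of_smul_mem hW hr, Measure.addHaar_ball_of_pos volume _ hr,
      finrank_euclideanSpace_fin, ENNReal.mul_div_mul_left _ _ hrn ENNReal.ofReal_ne_top]
  have hlim := tendsto_nhds_unique (h.congr' hconst) tendsto_const_nhds
  exact (ENNReal.div_pos hW₁ measure_ball_lt_top.ne).ne' hlim.symm

end Density

section PolynomialFunctions

open MvPolynomial

variable {n : ℕ}

lemma continuous_eval_euc (P : MvPolynomial (Fin n) ℝ) :
    Continuous fun y : Euc n => eval (fun i => y i) P :=
  (continuous_eval P).comp (PiLp.continuous_ofLp 2 _)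

lemma abs_eval_le_of_le_degree {P : MvPolynomial (Fin n) ℝ} {m : ℕ}
    (hP : ∀ d ∈ P.support, m ≤ d.degree) :
    ∃ C, ∀ y : Euc n, ‖y‖ ≤ 1 → |eval (fun i => y i) P| ≤ C * ‖y‖ ^ m := by
  refine ⟨∑ d ∈ P.support, |coeff d P|, fun y hy => ?_⟩
  rw [eval_eq, Finset.sum_mul]
  refine (Finset.abs_sum_le_sum_abs _ _).trans <| Finset.sum_le_sum fun d hd => ?_
  rw [abs_mul, Finset.abs_prod]
  gcongr
  calc ∏ i ∈ d.support, |y i ^ d i| ≤ ∏ i ∈ d.support, ‖y‖ ^ d i := by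
        gcongr with i
        rw [abs_pow]
        gcongr
        exact PiLp.norm_apply_le y i
    _ = ‖y‖ ^ d.degree := by rw [Finset.prod_pow_eq_pow_sum, Finsupp.degree_apply]
    _ ≤ ‖y‖ ^ m := pow_le_pow_of_le_one (norm_nonneg y) hy (hP d hd)

lemma MvPolynomial.IsHomogeneous.smul_mem_setOf_lt_abs_eval {L : MvPolynomial (Fin n) ℝ} {m : ℕ}
    (hL : L.IsHomogeneous m) (c : ℝ) {t : ℝ} (ht : 0 < t) {y : Euc n}
    (hy : c * ‖y‖ ^ m < |eval (fun i => y i) L|) :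
    c * ‖t • y‖ ^ m < |eval (fun i => (t • y) i) L| := by
  have hsmul : eval (fun i => (t • y) i) L = t ^ m * eval (fun i => y i) L := hL.eval_smul t _
  rw [hsmul, norm_smul, Real.norm_eq_abs, abs_of_pos ht, abs_mul, abs_pow, abs_of_pos ht, mul_pow,
    mul_left_comm]
  exact mul_lt_mul_of_pos_left hy (by positivity)

lemma MvPolynomial.IsHomogeneous.exists_mul_norm_pow_lt_abs_eval {L : MvPolynomial (Fin n) ℝ}
    {m : ℕ} (hL : L.IsHomogeneous m) (hL0 : L ≠ 0) :
    ∃ c > 0, ∃ y ∈ ball (0 : Euc n) 1, c * ‖y‖ ^ m < |eval (fun i => y i) L| := by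
  obtain ⟨x, hx⟩ : ∃ x : Fin n → ℝ, eval x L ≠ 0 := by
    by_contra! h
    exact hL0 (MvPolynomial.funext fun x => by rw [h x, map_zero])
  set y : Euc n := WithLp.toLp 2 x
  have hy : |eval (fun i => y i) L| / (‖y‖ ^ m + 1) * ‖y‖ ^ m < |eval (fun i => y i) L| := by
    rw [div_mul_eq_mul_div, div_lt_iff₀ (by positivity)]
    exact mul_lt_mul_of_pos_left (lt_add_one _) (abs_pos.2 hx)
  have ht : (0 : ℝ) < (‖y‖ + 1)⁻¹ := by positivity
  refine ⟨_, by positivity, (‖y‖ + 1)⁻¹ • y, ?_, hL.smul_mem_setOf_lt_abs_eval _ ht hy⟩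
  rw [mem_ball_zero_iff, norm_smul, Real.norm_eq_abs, abs_of_pos ht,
    inv_mul_lt_one₀ (by positivity)]
  exact lt_add_one _

lemma exists_cone_subset_setOf_lt_abs_eval {Q : MvPolynomial (Fin n) ℝ} (hQ : Q ≠ 0) {k : ℕ}
    (hQk : Q.totalDegree ≤ k) :
    ∃ W : Set (Euc n), IsOpen W ∧ (∀ t : ℝ, 0 < t → ∀ y ∈ W, t • y ∈ W) ∧
      (W ∩ ball 0 1).Nonempty ∧ ∃ ε > 0, ∃ r₀ > 0,
        W ∩ ball 0 r₀ ⊆ {y | ε * ‖y‖ ^ k < |eval (fun i => y i) Q|} := by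
  obtain ⟨m, hL0, htail⟩ := exists_homogeneousComponent_ne_zero_lt_degree hQ
  set L := homogeneousComponent m Q
  have hL : L.IsHomogeneous m := homogeneousComponent_isHomogeneous m Q
  have hmk : m ≤ k := by
    by_contra! h
    exact hL0 (homogeneousComponent_eq_zero _ _ (hQk.trans_lt h))
  obtain ⟨C, hC⟩ := abs_eval_le_of_le_degree (m := m + 1) htail
  obtain ⟨c, hc, y₀, hy₀1, hy₀⟩ := hL.exists_mul_norm_pow_lt_abs_eval hL0
  refine ⟨{y | c * ‖y‖ ^ m < |eval (fun i => y i) L|},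
    isOpen_lt (by fun_prop) (continuous_eval_euc L).abs,
    fun t ht y hy => hL.smul_mem_setOf_lt_abs_eval c ht hy, ⟨y₀, hy₀, hy₀1⟩,
    c / 2, by positivity, min 1 (c / (2 * (|C| + 1))), by positivity, ?_⟩
  rintro y ⟨hyW, hyr⟩
  rw [mem_ball_zero_iff, lt_min_iff, lt_div_iff₀ (by positivity)] at hyr
  have htail_y := hC y hyr.1.le
  rw [map_sub] at htail_y
  have hCy : C * ‖y‖ ≤ c / 2 := by nlinarith [le_abs_self C, norm_nonneg y]
  have hpow : ‖y‖ ^ k ≤ ‖y‖ ^ m := pow_le_pow_of_le_one (norm_nonneg y) hyr.1.le hmk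
  calc c / 2 * ‖y‖ ^ k ≤ c * ‖y‖ ^ m - C * ‖y‖ * ‖y‖ ^ m := by
        nlinarith [pow_nonneg (norm_nonneg y) m]
    _ < |eval (fun i => y i) L| - C * ‖y‖ ^ (m + 1) := by rw [pow_succ]; linarith [hyW.out]
    _ ≤ |eval (fun i => y i) Q| := by
        linarith [abs_sub_abs_le_abs_sub (eval (fun i => y i) L) (eval (fun i => y i) Q),
          abs_sub_comm (eval (fun i => y i) L) (eval (fun i => y i) Q)]

lemma IsPolyFun.continuous {k : ℕ} {p : Euc n → ℝ} (hp : IsPolyFun n k p) : Continuous p := by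
  obtain ⟨P, -, hP⟩ := hp
  simpa only [← funext hP] using continuous_eval_euc P

lemma IsPolyFun.sub {k : ℕ} {p q : Euc n → ℝ} (hp : IsPolyFun n k p) (hq : IsPolyFun n k q) :
    IsPolyFun n k (p - q) := by
  obtain ⟨P, hPk, hP⟩ := hp
  obtain ⟨Q, hQk, hQ⟩ := hq
  exact ⟨P - Q, (totalDegree_sub P Q).trans (max_le hPk hQk), fun x => by simp [hP, hQ]⟩

lemma IsPolyFun.comp_add_left {k : ℕ} {p : Euc n → ℝ} (hp : IsPolyFun n k p) (x₀ : Euc n) :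
    IsPolyFun n k fun y => p (x₀ + y) := by
  obtain ⟨P, hPk, hP⟩ := hp
  refine ⟨aeval (fun i => X i + C (x₀ i)) P, (totalDegree_aeval_le P fun i => ?_).trans hPk,
    fun y => ?_⟩
  · exact (totalDegree_add _ _).trans (by simp [totalDegree_X, totalDegree_C])
  · rw [eval_aeval_X_add_C, add_comm]
    exact hP _

theorem IsPolyFun.eq_zero_of_forall_densityZeroAt_zero {k : ℕ} {g : Euc n → ℝ}
    (hg : IsPolyFun n k g) (h : ∀ ε > 0, DensityZeroAt {y | ε * ‖y‖ ^ k < |g y|} 0) : g = 0 := by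
  obtain ⟨Q, hQk, hgQ⟩ := hg
  by_contra hg0
  have hQ : Q ≠ 0 := by
    rintro rfl
    exact hg0 (funext fun y => by simp [hgQ])
  obtain ⟨W, hWo, hW, ⟨y, hy⟩, ε, hε, r₀, hr₀, hsub⟩ := exists_cone_subset_setOf_lt_abs_eval hQ hQk
  refine not_densityZeroAt_inter_ball_of_smul_mem hWo.measurableSet hW
    ((hWo.inter isOpen_ball).measure_ne_zero volume ⟨y, hy⟩) hr₀ ((h ε hε).mono ?_)
  simpa only [hgQ] using hsub

theorem IsPolyFun.eq_zero_of_forall_densityZeroAt {k : ℕ} {g : Euc n → ℝ} (hg : IsPolyFun n k g)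
    {x₀ : Euc n} (h : ∀ ε > 0, DensityZeroAt {x | ε * ‖x - x₀‖ ^ k < |g x|} x₀) : g = 0 := by
  have h0 := (hg.comp_add_left x₀).eq_zero_of_forall_densityZeroAt_zero fun ε hε => by
    simpa using (h ε hε).preimage_add_left
  funext x
  simpa using congrFun h0 (x - x₀)

end PolynomialFunctions

lemma measurableSet_setOf_mem_and_lt {α : Type*} [MeasurableSpace α] {D : Set α}
    (hD : MeasurableSet D) {u v : α → ℝ} (hu : Measurable (D.domRestrict u))
    (hv : Measurable (D.domRestrict v)) : MeasurableSet {x | x ∈ D ∧ u x < v x} := by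
  have : {x | x ∈ D ∧ u x < v x} = (↑) '' {y : D | u y < v y} := by
    ext x
    simp [and_comm]
  rw [this]
  exact hD.subtype_image (measurableSet_lt hu hv)

lemma setOf_lt_abs_sub_subset_union {α : Type*} (D : Set α) (f p q φ : α → ℝ) (ε : ℝ) :
    {x | ε * φ x < |p x - q x|} ⊆
      Dᶜ ∪ {x | x ∈ D ∧ ε / 2 * φ x < |f x - p x|} ∪ {x | x ∈ D ∧ ε / 2 * φ x < |f x - q x|} := by
  intro x hx
  by_contra! hx'
  simp only [Set.mem_union, Set.mem_compl_iff, Set.mem_ofPred_eq, not_or, not_not, not_and,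
    not_lt] at hx hx'
  obtain ⟨⟨hxD, hxp⟩, hxq⟩ := hx'
  have htri := abs_sub_le (p x) (f x) (q x)
  rw [abs_sub_comm (p x) (f x)] at htri
  linarith [hxp hxD, hxq hxD]

theorem stmt8_general (n : ℕ) (D : Set (Euc n)) (hD : MeasurableSet D)
    (f : Euc n → ℝ) (hf : Measurable (D.restrict f)) (k : ℕ)
    (x₀ : Euc n)
    (p q : Euc n → ℝ)
    (hp : ApproxDiffAt k D f x₀ p) (hq : ApproxDiffAt k D f x₀ q) :
    p = q := by
  obtain ⟨hdens, hpk, hpf⟩ := hp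
  obtain ⟨-, hqk, hqf⟩ := hq
  have hexc {r : Euc n → ℝ} (hr : IsPolyFun n k r) (ε : ℝ) :
      MeasurableSet {x | x ∈ D ∧ ε * ‖x - x₀‖ ^ k < |f x - r x|} :=
    measurableSet_setOf_mem_and_lt hD
      ((by fun_prop : Measurable fun x : Euc n => ε * ‖x - x₀‖ ^ k).comp measurable_subtype_coe)
      (hf.sub (hr.continuous.measurable.comp measurable_subtype_coe)).abs
  rw [← sub_eq_zero]
  refine (hpk.sub hqk).eq_zero_of_forall_densityZeroAt (x₀ := x₀) fun ε hε => ?_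
  have hDp := hdens.densityZeroAt_compl.union hD.compl (hexc hpk _) (hpf _ (half_pos hε))
  exact (hDp.union (hD.compl.union (hexc hpk _)) (hexc hqk _) (hqf _ (half_pos hε))).mono
    (setOf_lt_abs_sub_subset_union D f p q (fun x => ‖x - x₀‖ ^ k) ε)

/-- **Proposition 3.3(2)** (abelian case): uniqueness of approximate derivatives
of order `k`. -/
theorem stmt8 (n : ℕ) (hn : 0 < n) (D : Set (Euc n)) (hD : MeasurableSet D)
    (f : Euc n → ℝ) (hf : Measurable (D.restrict f)) (k : ℕ)
    (x₀ : Euc n) (hx₀ : x₀ ∈ D) (hdens : DensityOneAt D x₀)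
    (p q : Euc n → ℝ)
    (hp : ApproxDiffAt k D f x₀ p) (hq : ApproxDiffAt k D f x₀ q) :
    p = q :=
  stmt8_general n D hD f hf k x₀ p q hp hq
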